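/- arXiv:2007.05862 — 5 statements merged into one kernel-verified Lean document; each statement's English description precedes it below -/
import Mathlib

section
/- Let X be a strongly irreducible shift space. Then any Borel probability measure on X that is nonsingular for the Gibbs relation T_X (i.e., the T_X-saturation of any null set is null) has full support. -/
open MeasureTheory

/-- The left shift by `k` on bi-infinite sequences. `shiftZ 1` is the shift map `σ`. -/
def shiftZ {A : Type*} (k : ℤ) (x : ℤ → A) : ℤ → A := fun n => x (n + k)

/-- The word `w` occurs in `x` at position `i`. -/
def occursAt {A : Type*} (x : ℤ → A) (w : List A) (i : ℤ) : Prop :=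
  ∀ j : Fin w.length, x (i + (j.1 : ℤ)) = w.get j

/-- The word `w` belongs to the language of `X`. -/
def InLanguage {A : Type*} (X : Set (ℤ → A)) (w : List A) : Prop :=
  ∃ x ∈ X, ∃ i : ℤ, occursAt x w i

/-- A shift space: a closed, shift-invariant subset of the full shift. -/
def IsShiftSpace {A : Type*} [TopologicalSpace A] (X : Set (ℤ → A)) : Prop :=
  IsClosed X ∧ ∀ k : ℤ, ∀ x ∈ X, shiftZ k x ∈ X

/-- `x` is doubly transitive in `X`. -/
def DoublyTransitive {A : Type*} (X : Set (ℤ → A)) (x : ℤ → A) : Prop :=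
  ∀ w : List A, InLanguage X w →
    (∀ N : ℤ, ∃ i : ℤ, N ≤ i ∧ occursAt x w i) ∧
    (∀ N : ℤ, ∃ i : ℤ, i ≤ N ∧ occursAt x w i)

/-- Irreducibility: any two words of the language can be joined within the language. -/
def IrreducibleShift {A : Type*} (X : Set (ℤ → A)) : Prop :=
  ∀ u v : List A, InLanguage X u → InLanguage X v →
    ∃ w : List A, InLanguage X (u ++ w ++ v)

/-- `μ` is fully supported on `X`: every open set meeting `X` has positive measure. -/
def FullSupportOn {A : Type*} [TopologicalSpace A] [MeasurableSpace A]
    (μ : Measure (ℤ → A)) (X : Set (ℤ → A)) : Prop :=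
  ∀ U : Set (ℤ → A), IsOpen U → (U ∩ X).Nonempty → 0 < μ U

/-- The Gibbs (homoclinic/tail) relation on `X`: both points lie in `X` and agree
outside a finite window. -/
def GibbsRel {A : Type*} (X : Set (ℤ → A)) (x y : ℤ → A) : Prop :=
  x ∈ X ∧ y ∈ X ∧ ∃ N : ℤ, ∀ n : ℤ, N < |n| → x n = y n

/-- Strong irreducibility: there is a gap `r` such that any two words of the language can be
joined by a connecting word of any prescribed length `s ≥ r`. -/
def StronglyIrreducible {A : Type*} (X : Set (ℤ → A)) : Prop :=
  ∃ r : ℕ, 1 ≤ r ∧ ∀ u v : List A, InLanguage X u → InLanguage X v →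
    ∀ s : ℕ, r ≤ s → ∃ w : List A, w.length = s ∧ InLanguage X (u ++ w ++ v)

/-- `μ` is nonsingular for the relation `Rel`: the saturation of any null Borel set is null. -/
def NonsingularFor {A : Type*} [MeasurableSpace A]
    (μ : MeasureTheory.Measure (ℤ → A)) (Rel : (ℤ → A) → (ℤ → A) → Prop) : Prop :=
  ∀ S : Set (ℤ → A), MeasurableSet S → μ S = 0 → μ {y | ∃ x ∈ S, Rel x y} = 0

/-!
A null open set around `x ∈ X` contains a null cylinder `C` fixing `x` on a window `[-N, N]`.
Strong irreducibility splices this central word of `x` into any `y ∈ X`, with gaps of length `r`,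
keeping `y` on arbitrarily long annuli `N + r < |m| ≤ N + r + t`; compactness of `X` turns these
finite splicings into a point of `C ∩ X` agreeing with `y` outside `[-N-r, N+r]`. So `X` lies in
the Gibbs saturation of the null set `C ∩ X`, which is null by nonsingularity: `μ X = 0`.
-/

open Set

section

variable {A : Type*}

lemma occursAt_shiftZ (k : ℤ) (p : ℤ → A) (w : List A) (i : ℤ) :
    occursAt (shiftZ k p) w i ↔ occursAt p w (i + k) := by
  simp only [occursAt, shiftZ, add_right_comm i]

lemma occursAt.of_append {x : ℤ → A} {u v : List A} {i : ℤ} (h : occursAt x (u ++ v) i) :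
    occursAt x u i ∧ occursAt x v (i + u.length) := by
  constructor
  · intro j
    simpa [List.getElem_append_left j.2] using h ⟨j, by simp; omega⟩
  · intro j
    simpa [add_assoc] using h ⟨u.length + j, by simp⟩

def window (y : ℤ → A) (a : ℤ) (n : ℕ) : List A := List.ofFn fun j : Fin n => y (a + j)

@[simp] lemma length_window (y : ℤ → A) (a : ℤ) (n : ℕ) : (window y a n).length = n :=
  List.length_ofFn

lemma occursAt_window_iff {q y : ℤ → A} {a : ℤ} {n : ℕ} :
    occursAt q (window y a n) a ↔ EqOn q y (Ico a (a + n)) := by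
  constructor
  · rintro h m ⟨ham, hmn⟩
    obtain ⟨j, rfl⟩ : ∃ j : ℕ, m = a + j := ⟨(m - a).toNat, by omega⟩
    simpa [window] using h ⟨j, by simp; omega⟩
  · intro h j
    have hj : (j : ℕ) < n := by simpa using j.2
    rw [List.get_eq_getElem]
    simpa [window] using h (show a + (j : ℕ) ∈ Ico a (a + n) from ⟨by omega, by omega⟩)

lemma InLanguage.window {X : Set (ℤ → A)} {y : ℤ → A} (hy : y ∈ X) (a : ℤ) (n : ℕ) :
    InLanguage X (window y a n) :=
  ⟨y, hy, a, occursAt_window_iff.2 fun _ _ => rfl⟩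

section Gluing

variable {X : Set (ℤ → A)} {r : ℕ}

lemma exists_mem_occursAt_of_join (hshift : ∀ k : ℤ, ∀ x ∈ X, shiftZ k x ∈ X)
    (hjoin : ∀ u v : List A, InLanguage X u → InLanguage X v →
      ∃ w : List A, w.length = r ∧ InLanguage X (u ++ w ++ v))
    {u w v : List A} (hu : InLanguage X u) (hw : InLanguage X w) (hv : InLanguage X v) (a : ℤ) :
    ∃ q ∈ X, occursAt q u a ∧ occursAt q w (a + u.length + r) ∧
      occursAt q v (a + u.length + r + w.length + r) := by
  obtain ⟨w₁, hw₁, huw⟩ := hjoin u w hu hw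
  obtain ⟨w₂, hw₂, p, hp, i, hi⟩ := hjoin _ v huw hv
  refine ⟨shiftZ (i - a) p, hshift _ _ hp, ?_⟩
  have hocc := (occursAt_shiftZ (i - a) p _ a).2 (by rwa [add_sub_cancel])
  obtain ⟨hocc, hqv⟩ := hocc.of_append
  obtain ⟨hocc, -⟩ := hocc.of_append
  obtain ⟨hocc, hqw⟩ := hocc.of_append
  obtain ⟨hqu, -⟩ := hocc.of_append
  simp only [List.length_append, hw₁, hw₂, Nat.cast_add] at hqw hqv
  refine ⟨hqu, by rwa [← add_assoc] at hqw, ?_⟩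
  convert hqv using 1
  ring

lemma exists_mem_eqOn_center_eqOn_annulus (hshift : ∀ k : ℤ, ∀ x ∈ X, shiftZ k x ∈ X)
    (hjoin : ∀ u v : List A, InLanguage X u → InLanguage X v →
      ∃ w : List A, w.length = r ∧ InLanguage X (u ++ w ++ v))
    {x y : ℤ → A} (hx : x ∈ X) (hy : y ∈ X) (N t : ℕ) :
    ∃ q ∈ X, EqOn q x {m | |m| ≤ N} ∧ EqOn q y {m | N + r < |m| ∧ |m| ≤ N + r + t} := by
  -- `y` on `[-(N+r+t), -(N+r))`, gap, `x` on `[-N, N]`, gap, `y` on `[N+r+1, N+r+t]`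
  obtain ⟨q, hqX, hqu, hqw, hqv⟩ := exists_mem_occursAt_of_join hshift hjoin
    (InLanguage.window hy (-(N + r + t)) t) (InLanguage.window hx (-N) (2 * N + 1))
    (InLanguage.window hy (N + r + 1) t) (-(N + r + t))
  simp only [length_window] at hqw hqv
  rw [show -(N + r + t : ℤ) + t + r = -N by ring] at hqw
  rw [show -(N + r + t : ℤ) + t + r + (2 * N + 1 : ℕ) + r = N + r + 1 by push_cast; ring] at hqv
  rw [occursAt_window_iff] at hqu hqw hqv
  refine ⟨q, hqX, fun m (hm : |m| ≤ N) => hqw ?_, fun m ⟨hm₁, hm₂⟩ => ?_⟩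
  · obtain ⟨hm₁, hm₂⟩ := abs_le.1 hm
    constructor <;> push_cast <;> omega
  · rcases le_or_gt 0 m with h0 | h0
    · rw [abs_of_nonneg h0] at hm₁ hm₂
      exact hqv ⟨by omega, by omega⟩
    · rw [abs_of_neg h0] at hm₁ hm₂
      exact hqu ⟨by omega, by omega⟩

end Gluing

lemma isClosed_setOf_eqOn {ι : Type*} [TopologicalSpace A] [T2Space A] (f : ι → A)
    (s : Set ι) : IsClosed {q : ι → A | EqOn q f s} := by
  simp only [EqOn, ofPred_forall]
  exact isClosed_iInter fun m => isClosed_iInter fun _ =>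
    isClosed_eq (continuous_apply m) continuous_const

lemma IsCompact.exists_mem_eqOn_iUnion {ι : Type*} [TopologicalSpace A] [T2Space A]
    {X : Set (ι → A)} (hX : IsCompact X) (x y : ι → A) (s : Set ι) {T : ℕ → Set ι}
    (hT : Monotone T) (h : ∀ t, ∃ q ∈ X, EqOn q x s ∧ EqOn q y (T t)) :
    ∃ z ∈ X, EqOn z x s ∧ EqOn z y (⋃ t, T t) := by
  obtain ⟨z, hz⟩ := IsCompact.nonempty_iInter_of_sequence_nonempty_isCompact_isClosed
    (fun t => X ∩ {q | EqOn q x s} ∩ {q | EqOn q y (T t)})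
    (fun t => inter_subset_inter_right _ fun q hq => hq.mono (hT t.le_succ))
    (fun t => by obtain ⟨q, hq⟩ := h t; exact ⟨q, ⟨hq.1, hq.2.1⟩, hq.2.2⟩)
    (hX.inter_right (isClosed_setOf_eqOn x s) |>.inter_right (isClosed_setOf_eqOn y _))
    (fun t => hX.isClosed.inter (isClosed_setOf_eqOn x s) |>.inter (isClosed_setOf_eqOn y _))
  simp only [mem_iInter, mem_inter_iff] at hz
  refine ⟨z, (hz 0).1.1, (hz 0).1.2, fun m hm => ?_⟩
  obtain ⟨t, ht⟩ := mem_iUnion.1 hm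
  exact (hz t).2 ht

def centralCylinder (x : ℤ → A) (N : ℕ) : Set (ℤ → A) := {z | EqOn z x {m | |m| ≤ N}}

lemma measurableSet_centralCylinder [MeasurableSpace A] [MeasurableSingletonClass A]
    (x : ℤ → A) (N : ℕ) : MeasurableSet (centralCylinder x N) := by
  simp only [centralCylinder, EqOn, ofPred_forall]
  exact .iInter fun m => .iInter fun _ =>
    (measurableSet_singleton (x m)).preimage (measurable_pi_apply m)

lemma exists_centralCylinder_subset [TopologicalSpace A] {U : Set (ℤ → A)} (hU : IsOpen U)
    {x : ℤ → A} (hx : x ∈ U) : ∃ N : ℕ, centralCylinder x N ⊆ U := by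
  obtain ⟨I, u, hIu, hIU⟩ := isOpen_pi_iff.1 hU x hx
  refine ⟨I.sup Int.natAbs, fun z hz => hIU fun i hi => ?_⟩
  have hiN : |i| ≤ (I.sup Int.natAbs : ℕ) := by
    rw [Int.abs_eq_natAbs]
    exact_mod_cast Finset.le_sup (f := Int.natAbs) hi
  rw [hz hiN]
  exact (hIu i hi).2

lemma StronglyIrreducible.exists_gibbsRel_mem_centralCylinder [TopologicalSpace A]
    [DiscreteTopology A] [Finite A] {X : Set (ℤ → A)} (hsi : StronglyIrreducible X)
    (hX : IsShiftSpace X) {x y : ℤ → A} (hx : x ∈ X) (hy : y ∈ X) (N : ℕ) :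
    ∃ z ∈ centralCylinder x N ∩ X, GibbsRel X z y := by
  obtain ⟨r, -, hjoin⟩ := hsi
  obtain ⟨z, hzX, hzx, hzy⟩ := hX.1.isCompact.exists_mem_eqOn_iUnion x y {m | |m| ≤ N}
    (T := fun t : ℕ => {m : ℤ | N + r < |m| ∧ |m| ≤ N + r + t})
    (fun _ _ hle _ hm => ⟨hm.1, hm.2.trans (by gcongr)⟩)
    (exists_mem_eqOn_center_eqOn_annulus hX.2 (fun u v hu hv => hjoin u v hu hv r le_rfl)
      hx hy N)
  exact ⟨z, ⟨hzx, hzX⟩, hzX, hy, N + r,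
    fun m hm => hzy (mem_iUnion.2 ⟨|m|.toNat, hm, by omega⟩)⟩

end

theorem stmt4_general {A : Type*} [Fintype A] [TopologicalSpace A] [DiscreteTopology A]
    [MeasurableSpace A] [BorelSpace A]
    (X : Set (ℤ → A)) (hX : IsShiftSpace X) (hsi : StronglyIrreducible X)
    (μ : Measure (ℤ → A)) (hconc : μ X = 1)
    (hns : NonsingularFor μ (GibbsRel X)) :
    FullSupportOn μ X := by
  rintro U hU ⟨x, hxU, hxX⟩
  obtain ⟨N, hNU⟩ := exists_centralCylinder_subset hU hxU
  by_contra hU0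
  have hS : μ (centralCylinder x N ∩ X) = 0 :=
    measure_mono_null (inter_subset_left.trans hNU) (not_lt.1 hU0 |>.antisymm bot_le)
  have hsat := hns _ ((measurableSet_centralCylinder x N).inter hX.1.measurableSet) hS
  have hX_sub_sat : X ⊆ {y | ∃ z ∈ centralCylinder x N ∩ X, GibbsRel X z y} :=
    fun y hy => hsi.exists_gibbsRel_mem_centralCylinder hX hxX hy N
  simp [measure_mono_null hX_sub_sat hsat] at hconc

/-- on a strongly irreducible shift space, every Borel probability measure
that is nonsingular for the Gibbs relation has full support. -/
theorem stmt4 {A : Type*} [Fintype A] [TopologicalSpace A] [DiscreteTopology A]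
    [MeasurableSpace A] [BorelSpace A]
    (X : Set (ℤ → A)) (hX : IsShiftSpace X) (hsi : StronglyIrreducible X)
    (μ : Measure (ℤ → A)) (hprob : IsProbabilityMeasure μ) (hconc : μ X = 1)
    (hns : NonsingularFor μ (GibbsRel X)) :
    FullSupportOn μ X :=
  stmt4_general X hX hsi μ hconc hns
end

section
/- Let X be an irreducible shift of finite type of period p with cyclically moving classes X_0, ..., X_{p-1}, and let f be in SV(X). Define R_p f = sum_{j=0}^{p-1} f o sigma^{-j}, viewed as a function on X_0 equipped with sigma^p (a shift space over alphabet contained in B_p(X)). Then R_p f has summable variation on (X_0, sigma^p); in fact sum_{k>=0} v_{kp}(f o sigma^{-j}) <= (1/p) ||f o sigma^{-j}||_SV + constant, so ||R_p f||_{SV(X_0)} is finite. -/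
/-- The `k`-th variation of `f` over `X`: the sup of `|f x - f y|` over pairs in `X`
agreeing on the window `[-k, k]`. -/
noncomputable def varOf {A : Type*} (X : Set (ℤ → A)) (f : (ℤ → A) → ℝ) (k : ℕ) : ℝ :=
  sSup {d : ℝ | ∃ x ∈ X, ∃ y ∈ X, (∀ i : ℤ, |i| ≤ (k : ℤ) → x i = y i) ∧ d = |f x - f y|}

/-- The `(-1)`-st variation: the sup norm of `f` over `X`. -/
noncomputable def supAbsOn {A : Type*} (X : Set (ℤ → A)) (f : (ℤ → A) → ℝ) : ℝ :=
  sSup {d : ℝ | ∃ x ∈ X, d = |f x|}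

/-- `f` has summable variation on `X`. -/
def HasSummableVariation {A : Type*} (X : Set (ℤ → A)) (f : (ℤ → A) → ℝ) : Prop :=
  Summable (varOf X f)

/-- The SV-norm `‖f‖ = v₋₁(f) + ∑_{k ≥ 0} v_k(f)` (i.e. `∑_{k ≥ 0} v_{k-1}(f)`). -/
noncomputable def SVnorm {A : Type*} (X : Set (ℤ → A)) (f : (ℤ → A) → ℝ) : ℝ :=
  supAbsOn X f + ∑' k : ℕ, varOf X f k

/-- A shift of finite type: defined by excluding a finite set of words of some length `n`. -/
def IsSFT {A : Type*} (X : Set (ℤ → A)) : Prop :=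
  ∃ (n : ℕ) (F : Finset (List A)),
    X = {x | ∀ i : ℤ, (List.ofFn fun j : Fin n => x (i + (j.1 : ℤ))) ∉ F}

/-- The `k`-th variation of `g` on `X₀` viewed as a shift space over the alphabet of
`p`-blocks: the sup of `|g x - g y|` over pairs in `X₀` agreeing on the `p`-blocks
indexed by `[-k, k]`, i.e. on the coordinates `[-kp, kp + p - 1]`. -/
noncomputable def varBlock {A : Type*} (p : ℕ) (X₀ : Set (ℤ → A)) (g : (ℤ → A) → ℝ)
    (k : ℕ) : ℝ :=
  sSup {d : ℝ | ∃ x ∈ X₀, ∃ y ∈ X₀,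
    (∀ i : ℤ, -((k : ℤ) * p) ≤ i → i ≤ (k : ℤ) * p + p - 1 → x i = y i) ∧ d = |g x - g y|}

/-- `R_p f = ∑_{j=0}^{p-1} f ∘ σ^{-j}`. -/
noncomputable def Rp {A : Type*} (p : ℕ) (f : (ℤ → A) → ℝ) : (ℤ → A) → ℝ :=
  fun x => ∑ j ∈ Finset.range p, f (shiftZ (-(j : ℤ)) x)

/-!
Each summand `f ∘ σ^{-j}` (`j < p`) of `R_p f` only sees coordinates shifted by at most
`p - 1`, so agreement on the `p`-blocks indexed by `[-(k+1), k+1]` forces agreement of the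
shifted points on `[-(k+1), k+1]`; hence `v_{k+1}(R_p f) ≤ p v_{k+1}(f)` on `(X₀, σᵖ)`.
Similarly `v_{(k+1)p}(f ∘ σ^{-j}) ≤ v_{k+1}(f)`. Both sequences are thus dominated by the
summable sequence of variations of `f`.
-/

section Variation

variable {A : Type*} {X X₀ : Set (ℤ → A)} {f : (ℤ → A) → ℝ} {M : ℝ}

lemma varOf_nonneg (k : ℕ) : 0 ≤ varOf X f k :=
  Real.sSup_nonneg <| by rintro _ ⟨x, -, y, -, -, rfl⟩; exact abs_nonneg _

lemma varBlock_nonneg (p : ℕ) (g : (ℤ → A) → ℝ) (k : ℕ) : 0 ≤ varBlock p X₀ g k :=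
  Real.sSup_nonneg <| by rintro _ ⟨x, -, y, -, -, rfl⟩; exact abs_nonneg _

lemma abs_sub_le_varOf (hM : ∀ x ∈ X, |f x| ≤ M) {x y : ℤ → A} (hx : x ∈ X) (hy : y ∈ X)
    {k : ℕ} (hxy : ∀ i : ℤ, |i| ≤ (k : ℤ) → x i = y i) : |f x - f y| ≤ varOf X f k := by
  refine le_csSup ⟨2 * M, ?_⟩ ⟨x, hx, y, hy, hxy, rfl⟩
  rintro _ ⟨a, ha, b, hb, -, rfl⟩
  calc |f a - f b| ≤ |f a| + |f b| := abs_sub _ _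
    _ ≤ 2 * M := by linarith [hM a ha, hM b hb]

lemma varOf_comp_shiftZ_le (hX : ∀ n : ℤ, ∀ x ∈ X, shiftZ n x ∈ X) (hM : ∀ x ∈ X, |f x| ≤ M)
    (j : ℕ) {m k : ℕ} (hmk : m + j ≤ k) :
    varOf X (fun x => f (shiftZ (-(j : ℤ)) x)) k ≤ varOf X f m := by
  refine Real.sSup_le ?_ (varOf_nonneg m)
  rintro _ ⟨x, hx, y, hy, hxy, rfl⟩
  refine abs_sub_le_varOf hM (hX _ _ hx) (hX _ _ hy) fun i hi => hxy _ ?_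
  rw [abs_le] at hi ⊢
  constructor <;> omega

/-- `hkm` says `m + p - 1 ≤ kp`: then the block window `[-kp, kp + p - 1]` contains
`[-m, m] - j` for every `j < p`. -/
lemma varBlock_Rp_le (hX : ∀ n : ℤ, ∀ x ∈ X, shiftZ n x ∈ X) (hX₀ : X₀ ⊆ X)
    (hM : ∀ x ∈ X, |f x| ≤ M) {p k m : ℕ} (hkm : m + p ≤ k * p + 1) :
    varBlock p X₀ (Rp p f) k ≤ p * varOf X f m := by
  refine Real.sSup_le ?_ (mul_nonneg p.cast_nonneg (varOf_nonneg m))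
  rintro _ ⟨x, hx, y, hy, hxy, rfl⟩
  have hterm : ∀ j ∈ Finset.range p,
      |f (shiftZ (-(j : ℤ)) x) - f (shiftZ (-(j : ℤ)) y)| ≤ varOf X f m := by
    intro j hj
    have hjp := Finset.mem_range.mp hj
    refine abs_sub_le_varOf hM (hX _ _ (hX₀ hx)) (hX _ _ (hX₀ hy)) fun i hi => ?_
    have hkm' : (m : ℤ) + p ≤ (k * p : ℕ) + 1 := by exact_mod_cast hkm
    push_cast at hkm'
    rw [abs_le] at hi
    exact hxy _ (by omega) (by omega)
  calc |Rp p f x - Rp p f y|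
      = |∑ j ∈ Finset.range p, (f (shiftZ (-(j : ℤ)) x) - f (shiftZ (-(j : ℤ)) y))| := by
        simp only [Rp, Finset.sum_sub_distrib]
    _ ≤ ∑ j ∈ Finset.range p, |f (shiftZ (-(j : ℤ)) x) - f (shiftZ (-(j : ℤ)) y)| :=
        Finset.abs_sum_le_sum_abs _ _
    _ ≤ ∑ _j ∈ Finset.range p, varOf X f m := Finset.sum_le_sum hterm
    _ = p * varOf X f m := by simp

end Variation

theorem stmt12_general {A : Type*} [Fintype A] [TopologicalSpace A]
    (X : Set (ℤ → A)) (hX : IsShiftSpace X)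
    (p : ℕ) (hp : 0 < p) (C : ℤ → Set (ℤ → A))
    (hcover : X = ⋃ i ∈ Finset.range p, C (i : ℤ))
    (f : (ℤ → A) → ℝ) (hf : Continuous f) (hsv : HasSummableVariation X f) :
    Summable (varBlock p (C 0) (Rp p f)) ∧
    (∀ j : ℕ, j < p →
      (Summable fun k : ℕ => varOf X (fun x => f (shiftZ (-(j : ℤ)) x)) (k * p)) ∧
      ∃ Cst : ℝ, (∑' k : ℕ, varOf X (fun x => f (shiftZ (-(j : ℤ)) x)) (k * p)) ≤
        (1 / p) * SVnorm X (fun x => f (shiftZ (-(j : ℤ)) x)) + Cst) := by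
  obtain ⟨M, hM⟩ := isCompact_univ.exists_bound_of_continuousOn hf.continuousOn
  have hfM : ∀ x ∈ X, |f x| ≤ M := fun x _ => hM x trivial
  have hC₀ : C 0 ⊆ X := hcover ▸ Set.subset_biUnion_of_mem (u := fun i : ℕ => C i)
    (Finset.mem_range.mpr hp)
  have hk : ∀ k : ℕ, k ≤ k * p := fun k => Nat.le_mul_of_pos_right k hp
  have hsv₁ := (summable_nat_add_iff 1).mpr hsv
  refine ⟨(summable_nat_add_iff 1).mp ?_, fun j hj => ⟨(summable_nat_add_iff 1).mp ?_, ?_⟩⟩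
  · refine (hsv₁.mul_left (p : ℝ)).of_nonneg_of_le (fun k => varBlock_nonneg p _ _) fun k => ?_
    exact varBlock_Rp_le hX.2 hC₀ hfM (by nlinarith [hk k])
  · refine hsv₁.of_nonneg_of_le (fun k => varOf_nonneg _) fun k => ?_
    exact varOf_comp_shiftZ_le hX.2 hfM j (by nlinarith [hk k])
  · exact ⟨_, (add_sub_cancel _ _).ge⟩

/-- for an irreducible SFT `X` of period `p` with cyclically moving classes
`C i` and `f ∈ SV(X)`, the function `R_p f` has summable variation on `(C 0, σᵖ)`;
quantitatively, `∑_{k ≥ 0} v_{kp}(f ∘ σ^{-j}) ≤ (1/p)‖f ∘ σ^{-j}‖_SV + constant`. -/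
theorem stmt12 {A : Type*} [Fintype A] [TopologicalSpace A] [DiscreteTopology A]
    (X : Set (ℤ → A)) (hX : IsShiftSpace X) (hSFT : IsSFT X) (hirr : IrreducibleShift X)
    (p : ℕ) (hp : 0 < p) (C : ℤ → Set (ℤ → A))
    (hper : ∀ i : ℤ, C (i + p) = C i)
    (hclosed : ∀ i : ℤ, IsClosed (C i))
    (hdisj : ∀ i j : ℤ, 0 ≤ i → i < j → j < p → Disjoint (C i) (C j))
    (hcover : X = ⋃ i ∈ Finset.range p, C (i : ℤ))
    (hcycle : ∀ i : ℤ, shiftZ 1 '' C i = C (i + 1))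
    (f : (ℤ → A) → ℝ) (hf : Continuous f) (hsv : HasSummableVariation X f) :
    Summable (varBlock p (C 0) (Rp p f)) ∧
    (∀ j : ℕ, j < p →
      (Summable fun k : ℕ => varOf X (fun x => f (shiftZ (-(j : ℤ)) x)) (k * p)) ∧
      ∃ Cst : ℝ, (∑' k : ℕ, varOf X (fun x => f (shiftZ (-(j : ℤ)) x)) (k * p)) ≤
        (1 / p) * SVnorm X (fun x => f (shiftZ (-(j : ℤ)) x)) + Cst) :=
  stmt12_general X hX p hp C hcover f hf hsv
end

section
/- Let X be an irreducible shift of finite type of period p with cyclically moving classes X_i, let f be a continuous function on X, and let mu be a shift-invariant measure on X corresponding to the sigma^p-invariant measure mu' = p mu|_{X_0} on X_0. Then h_X(mu, sigma) + integral of f dmu = (1/p)( h_{X_0}(mu', sigma^p) + integral of R_p f dmu' ), where R_p f = sum_{j=0}^{p-1} f o sigma^{-j}. Consequently, mu is an equilibrium measure for f on (X, sigma) if and only if mu' is an equilibrium measure for R_p f on (X_0, sigma^p). -/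
/-!
Restricting to `C 0` and rescaling, `μ ↦ p • μ|_{C 0}`, maps the `σ`-invariant probability
measures on `X` onto the `σᵖ`-invariant probability measures on `C 0`: a preimage of `ν` is its
average `p⁻¹ ∑_{j<p} σʲ_* ν` along one period of the orbit, since `σʲ_* ν` lives on `C j` and
only the term `j = 0` meets `C 0`. As `σ^{-j}` carries `μ|_{C 0}` to `μ|_{C (-j)}` and these
`p` classes partition `X`, `∫ R_p f d(p • μ|_{C 0}) = p ∫ f dμ`; together with Abramov's formula
the correspondence multiplies `h + ∫ f` by `p`, so it matches the maximizers.
-/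

open MeasureTheory
open scoped ENNReal

/-- `μ` is an equilibrium measure for the potential `f` on `(X, T)`, with respect to an
entropy functional `ent` (the Kolmogorov-Sinai entropy of the system `(T, ·)`): among all
`T`-invariant probability measures concentrated on `X`, it maximizes `ent + ∫ f`. -/
def IsEquilibriumFor {A : Type*} [MeasurableSpace A]
    (ent : Measure (ℤ → A) → ℝ) (T : (ℤ → A) → (ℤ → A)) (X : Set (ℤ → A))
    (f : (ℤ → A) → ℝ) (μ : Measure (ℤ → A)) : Prop :=
  IsProbabilityMeasure μ ∧ μ X = 1 ∧ μ.map T = μ ∧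
    ∀ lam : Measure (ℤ → A), IsProbabilityMeasure lam → lam X = 1 → lam.map T = lam →
      ent lam + ∫ x, f x ∂lam ≤ ent μ + ∫ x, f x ∂μ

open Finset

theorem Function.Periodic.sum_range_add {M : Type*} [AddCommMonoid M] {g : ℤ → M} {p : ℕ}
    (hg : Function.Periodic g p) (a : ℤ) :
    ∑ j ∈ range p, g (a + j) = ∑ j ∈ range p, g j := by
  have step : ∀ a : ℤ, ∑ j ∈ range p, g (a + 1 + j) = ∑ j ∈ range p, g (a + j) := by
    intro a
    cases p with
    | zero => simp
    | succ q =>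
      have hwrap : g (a + 1 + q) = g a := by
        simpa [add_assoc, add_comm (1 : ℤ)] using hg a
      rw [sum_range_succ, sum_range_succ', hwrap, Nat.cast_zero, add_zero]
      congr 1
      refine sum_congr rfl fun j _ => ?_
      push_cast
      ring_nf
  induction a using Int.induction_on with
  | zero => simp
  | succ k ih => rw [step, ih]
  | pred k ih => rw [← ih, ← step, sub_add_cancel]

theorem Function.Periodic.sum_range_neg {M : Type*} [AddCommMonoid M] {g : ℤ → M} {p : ℕ}
    (hg : Function.Periodic g p) :
    ∑ j ∈ range p, g (-j) = ∑ j ∈ range p, g j := by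
  rw [← sum_range_reflect, ← hg.sum_range_add (1 - p)]
  refine sum_congr rfl fun j hj => ?_
  rw [Nat.cast_sub (by simp at hj; omega), Nat.cast_sub (by simp at hj; omega)]
  push_cast
  ring_nf

section Shift

variable {A : Type*}

lemma shiftZ_shiftZ (k m : ℤ) (x : ℤ → A) : shiftZ k (shiftZ m x) = shiftZ (m + k) x := by
  funext n
  simp only [shiftZ, add_assoc, add_comm k m]

lemma shiftZ_comp_shiftZ (k m : ℤ) : (shiftZ k : (ℤ → A) → _) ∘ shiftZ m = shiftZ (m + k) :=
  funext (shiftZ_shiftZ k m)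

@[simp]
lemma shiftZ_zero : (shiftZ 0 : (ℤ → A) → (ℤ → A)) = id := by
  funext x n
  simp [shiftZ]

lemma preimage_shiftZ (k : ℤ) (S : Set (ℤ → A)) : shiftZ k ⁻¹' S = shiftZ (-k) '' S := by
  ext x
  constructor
  · intro hx
    exact ⟨shiftZ k x, hx, by simp [shiftZ_shiftZ]⟩
  · rintro ⟨y, hy, rfl⟩
    simpa [shiftZ_shiftZ] using hy

lemma image_shiftZ_of_image_shiftZ_one {C : ℤ → Set (ℤ → A)}
    (hcycle : ∀ i, shiftZ 1 '' C i = C (i + 1)) (k i : ℤ) : shiftZ k '' C i = C (i + k) := by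
  have hback : ∀ j, shiftZ (-1) '' C j = C (j - 1) := fun j => by
    rw [← sub_add_cancel j 1, ← hcycle, ← Set.image_comp, shiftZ_comp_shiftZ, add_neg_cancel,
      shiftZ_zero, Set.image_id, add_sub_cancel_right]
  induction k using Int.induction_on generalizing i with
  | zero => simp
  | succ k ih => rw [← shiftZ_comp_shiftZ, Set.image_comp, ih, hcycle, add_assoc]
  | pred k ih =>
    rw [sub_eq_add_neg (-(k : ℤ)), ← shiftZ_comp_shiftZ, Set.image_comp, ih, hback,
      sub_eq_add_neg, add_assoc]

lemma preimage_shiftZ_of_image_shiftZ_one {C : ℤ → Set (ℤ → A)}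
    (hcycle : ∀ i, shiftZ 1 '' C i = C (i + 1)) (k i : ℤ) : shiftZ k ⁻¹' C i = C (i - k) := by
  rw [preimage_shiftZ, image_shiftZ_of_image_shiftZ_one hcycle, sub_eq_add_neg]

variable [MeasurableSpace A]

@[fun_prop]
lemma measurable_shiftZ (k : ℤ) : Measurable (shiftZ k : (ℤ → A) → (ℤ → A)) :=
  measurable_pi_lambda _ fun n => measurable_pi_apply (n + k)

lemma map_shiftZ_add (μ : Measure (ℤ → A)) (m n : ℤ) :
    μ.map (shiftZ (m + n)) = (μ.map (shiftZ m)).map (shiftZ n) := by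
  rw [Measure.map_map (measurable_shiftZ n) (measurable_shiftZ m), shiftZ_comp_shiftZ]

lemma map_shiftZ_of_map_shiftZ_one {μ : Measure (ℤ → A)} (hμ : μ.map (shiftZ 1) = μ) (k : ℤ) :
    μ.map (shiftZ k) = μ := by
  have hback : μ.map (shiftZ (-1)) = μ := by
    conv_lhs => rw [← hμ]
    rw [← map_shiftZ_add, add_neg_cancel, shiftZ_zero, Measure.map_id]
  induction k using Int.induction_on with
  | zero => simp
  | succ k ih => rw [map_shiftZ_add, ih, hμ]
  | pred k ih => rw [sub_eq_add_neg, map_shiftZ_add, ih, hback]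

lemma map_shiftZ_one_sum_map_shiftZ {ν : Measure (ℤ → A)} {p : ℕ}
    (hν : ν.map (shiftZ p) = ν) :
    (∑ j ∈ range p, ν.map (shiftZ j)).map (shiftZ 1) = ∑ j ∈ range p, ν.map (shiftZ j) := by
  have hper : Function.Periodic (fun k : ℤ => ν.map (shiftZ k)) p := fun k => by
    simp only [add_comm k, map_shiftZ_add, hν]
  rw [Measure.map_finset_sum (measurable_shiftZ 1).aemeasurable, ← hper.sum_range_add 1]
  simp only [← map_shiftZ_add, add_comm (1 : ℤ)]

end Shift

def IsInvariantProbOn {A : Type*} [MeasurableSpace A] (T : (ℤ → A) → (ℤ → A))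
    (X : Set (ℤ → A)) (μ : Measure (ℤ → A)) : Prop :=
  IsProbabilityMeasure μ ∧ μ X = 1 ∧ μ.map T = μ

lemma IsInvariantProbOn.ae_mem {A : Type*} [MeasurableSpace A] {T : (ℤ → A) → (ℤ → A)}
    {X : Set (ℤ → A)} {μ : Measure (ℤ → A)} (hμ : IsInvariantProbOn T X μ)
    (hX : MeasurableSet X) : ∀ᵐ x ∂μ, x ∈ X := by
  obtain ⟨hprob, hμX, -⟩ := hμ
  rw [ae_mem_iff_measure_eq hX.nullMeasurableSet, hμX, measure_univ]

/-- The cyclically moving classes of `X`, with `C i` playing the role of `X_{i mod p}`. -/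
structure IsCyclicPartition {A : Type*} [MeasurableSpace A] (X : Set (ℤ → A)) (p : ℕ)
    (C : ℤ → Set (ℤ → A)) : Prop where
  measurableSet : ∀ i, MeasurableSet (C i)
  periodic : Function.Periodic C p
  pairwiseDisjoint : (range p : Set ℕ).PairwiseDisjoint fun i : ℕ => C i
  cover : X = ⋃ i ∈ range p, C i
  image_shiftZ_one : ∀ i, shiftZ 1 '' C i = C (i + 1)

namespace IsCyclicPartition

variable {A : Type*} [MeasurableSpace A] {X : Set (ℤ → A)} {p : ℕ} {C : ℤ → Set (ℤ → A)}
  {μ ν : Measure (ℤ → A)}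

lemma measurableSet_space (hC : IsCyclicPartition X p C) : MeasurableSet X := by
  rw [hC.cover]
  exact Finset.measurableSet_biUnion _ fun i _ => hC.measurableSet i

lemma sum_restrict (hC : IsCyclicPartition X p C) (hμ : ∀ᵐ x ∂μ, x ∈ X) :
    ∑ i ∈ range p, μ.restrict (C i) = μ := by
  conv_rhs => rw [← Measure.restrict_eq_self_of_ae_mem hμ, hC.cover,
    Measure.restrict_biUnion_finset hC.pairwiseDisjoint fun i => hC.measurableSet i,
    Measure.sum_fintype]
  exact (Finset.sum_coe_sort (range p) fun i => μ.restrict (C i)).symm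

lemma sum_restrict_neg (hC : IsCyclicPartition X p C) (hμ : ∀ᵐ x ∂μ, x ∈ X) :
    ∑ j ∈ range p, μ.restrict (C (-j)) = μ :=
  ((hC.periodic.comp μ.restrict).sum_range_neg).trans (hC.sum_restrict hμ)

lemma map_restrict (hC : IsCyclicPartition X p C) (hμ : μ.map (shiftZ 1) = μ) (k i : ℤ) :
    (μ.restrict (C i)).map (shiftZ k) = μ.restrict (C (i + k)) := by
  have hpre : shiftZ k ⁻¹' C (i + k) = C i := by
    rw [preimage_shiftZ_of_image_shiftZ_one hC.image_shiftZ_one, add_sub_cancel_right]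
  rw [← hpre, ← Measure.restrict_map (measurable_shiftZ k) (hC.measurableSet _),
    map_shiftZ_of_map_shiftZ_one hμ]

lemma measure_eq_measure_zero (hC : IsCyclicPartition X p C) (hμ : μ.map (shiftZ 1) = μ)
    (i : ℤ) : μ (C i) = μ (C 0) := by
  conv_rhs => rw [← map_shiftZ_of_map_shiftZ_one hμ (-i),
    Measure.map_apply (measurable_shiftZ _) (hC.measurableSet 0),
    preimage_shiftZ_of_image_shiftZ_one hC.image_shiftZ_one, zero_sub, neg_neg]

lemma natCast_mul_measure_zero (hC : IsCyclicPartition X p C) [IsFiniteMeasure μ]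
    (hμX : ∀ᵐ x ∂μ, x ∈ X) (hμ : μ.map (shiftZ 1) = μ) : (p : ℝ≥0∞) * μ (C 0) = μ Set.univ := by
  conv_rhs => rw [← hC.sum_restrict hμX]
  simp [hC.measure_eq_measure_zero hμ]

lemma integral_Rp (hC : IsCyclicPartition X p C) {f : (ℤ → A) → ℝ} (hf : Integrable f μ)
    (hμX : ∀ᵐ x ∂μ, x ∈ X) (hμ : μ.map (shiftZ 1) = μ) :
    ∫ x, Rp p f x ∂((p : ℝ≥0∞) • μ.restrict (C 0)) = p * ∫ x, f x ∂μ := by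
  have hmap : ∀ j : ℕ, (μ.restrict (C 0)).map (shiftZ (-j)) = μ.restrict (C (-j)) := fun j => by
    rw [hC.map_restrict hμ, zero_add]
  have hterm : ∀ j : ℕ, ∫ x, f (shiftZ (-j) x) ∂(μ.restrict (C 0)) =
      ∫ x, f x ∂(μ.restrict (C (-j))) := fun j => by
    rw [← hmap, integral_map (measurable_shiftZ _).aemeasurable
      ((hmap j).symm ▸ hf.restrict.aestronglyMeasurable)]
  have hint : ∀ j ∈ range p, Integrable (fun x => f (shiftZ (-j) x)) (μ.restrict (C 0)) :=
    fun j _ => ((hmap j).symm ▸ hf.restrict).comp_measurable (measurable_shiftZ _)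
  calc ∫ x, Rp p f x ∂((p : ℝ≥0∞) • μ.restrict (C 0))
      = p * ∑ j ∈ range p, ∫ x, f x ∂(μ.restrict (C (-j))) := by
        simp only [Rp, integral_smul_measure, integral_finsetSum _ hint, hterm,
          ENNReal.toReal_natCast, smul_eq_mul]
    _ = p * ∫ x, f x ∂μ := by
        rw [← integral_finsetSum_measure fun j _ => hf.restrict, hC.sum_restrict_neg hμX]

lemma isInvariantProbOn_smul_restrict (hC : IsCyclicPartition X p C)
    (hμ : IsInvariantProbOn (shiftZ 1) X μ) :
    IsInvariantProbOn (shiftZ p) (C 0) ((p : ℝ≥0∞) • μ.restrict (C 0)) := by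
  have hμX := hμ.ae_mem hC.measurableSet_space
  obtain ⟨hprob, -, hinv⟩ := hμ
  have hmass : (p : ℝ≥0∞) * μ (C 0) = 1 := by
    rw [hC.natCast_mul_measure_zero hμX hinv, measure_univ]
  refine ⟨⟨?_⟩, ?_, ?_⟩
  · rwa [Measure.smul_apply, Measure.restrict_apply_univ, smul_eq_mul]
  · rwa [Measure.smul_apply, Measure.restrict_apply_self, smul_eq_mul]
  · rw [Measure.map_smul, hC.map_restrict hinv, hC.periodic 0]

lemma restrict_zero_map_shiftZ_eq_zero (hC : IsCyclicPartition X p C) (hν : ∀ᵐ x ∂ν, x ∈ C 0)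
    {j : ℕ} (hj0 : j ≠ 0) (hjp : j < p) : (ν.map (shiftZ j)).restrict (C 0) = 0 := by
  have hpre : shiftZ j ⁻¹' C j = C 0 := by
    rw [preimage_shiftZ_of_image_shiftZ_one hC.image_shiftZ_one, sub_self]
  have hconc : (ν.map (shiftZ j)).restrict (C j) = ν.map (shiftZ j) := by
    rw [Measure.restrict_map (measurable_shiftZ _) (hC.measurableSet _), hpre,
      Measure.restrict_eq_self_of_ae_mem hν]
  have hdisj : C 0 ∩ C j = ∅ := by
    simpa using (hC.pairwiseDisjoint (mem_range.2 (hj0.bot_lt.trans hjp)) (mem_range.2 hjp)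
      (Ne.symm hj0)).inter_eq
  rw [← hconc, Measure.restrict_restrict (hC.measurableSet 0), hdisj, Measure.restrict_empty]

lemma exists_isInvariantProbOn_smul_restrict_eq (hC : IsCyclicPartition X p C) (hp : 0 < p)
    (hν : IsInvariantProbOn (shiftZ p) (C 0) ν) :
    ∃ μ, IsInvariantProbOn (shiftZ 1) X μ ∧ (p : ℝ≥0∞) • μ.restrict (C 0) = ν := by
  have hνC := hν.ae_mem (hC.measurableSet 0)
  obtain ⟨hprob, hνC0, hinv⟩ := hν
  have hp0 : (p : ℝ≥0∞) ≠ 0 := by exact_mod_cast hp.ne'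
  have hp_top : (p : ℝ≥0∞) ≠ ∞ := ENNReal.natCast_ne_top p
  set μ := (p : ℝ≥0∞)⁻¹ • ∑ j ∈ range p, ν.map (shiftZ j)
  have hfull : ∀ S, MeasurableSet S → (∀ j ∈ range p, C j ⊆ S) → μ S = 1 := by
    intro S hS hCS
    have hterm : ∀ j ∈ range p, ν.map (shiftZ j) S = 1 := fun j hj => by
      refine le_antisymm prob_le_one (hνC0 ▸ ?_)
      rw [Measure.map_apply (measurable_shiftZ _) hS, ← sub_self (j : ℤ),
        ← preimage_shiftZ_of_image_shiftZ_one hC.image_shiftZ_one]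
      exact measure_mono (Set.preimage_mono (hCS j hj))
    simp [μ, sum_congr rfl hterm, ENNReal.inv_mul_cancel hp0 hp_top]
  refine ⟨μ, ⟨⟨hfull _ MeasurableSet.univ fun _ _ => Set.subset_univ _⟩,
    hfull X hC.measurableSet_space fun j hj => hC.cover ▸ fun x hx => Set.mem_iUnion₂.2 ⟨j, hj, hx⟩, ?_⟩, ?_⟩
  · rw [Measure.map_smul, map_shiftZ_one_sum_map_shiftZ hinv]
  · rw [Measure.restrict_smul, smul_smul, ENNReal.mul_inv_cancel hp0 hp_top, one_smul,
      ← Measure.restrictₗ_apply, map_sum, sum_eq_single_of_mem 0 (mem_range.2 hp)]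
    · simp [Measure.restrictₗ_apply, Measure.restrict_eq_self_of_ae_mem hνC]
    · exact fun j hj hj0 => hC.restrict_zero_map_shiftZ_eq_zero hνC hj0 (mem_range.1 hj)

end IsCyclicPartition

section Equilibrium

variable {A : Type*} [MeasurableSpace A]

lemma isEquilibriumFor_iff {ent : Measure (ℤ → A) → ℝ} {T : (ℤ → A) → (ℤ → A)}
    {X : Set (ℤ → A)} {f : (ℤ → A) → ℝ} {μ : Measure (ℤ → A)} :
    IsEquilibriumFor ent T X f μ ↔ IsInvariantProbOn T X μ ∧
      ∀ ρ, IsInvariantProbOn T X ρ → ent ρ + ∫ x, f x ∂ρ ≤ ent μ + ∫ x, f x ∂μ := by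
  simp only [IsEquilibriumFor, IsInvariantProbOn, and_assoc, and_imp]

lemma isEquilibriumFor_iff_of_surjOn {ent ent' : Measure (ℤ → A) → ℝ}
    {T T' : (ℤ → A) → (ℤ → A)} {X X' : Set (ℤ → A)} {f f' : (ℤ → A) → ℝ}
    {μ : Measure (ℤ → A)} (Φ : Measure (ℤ → A) → Measure (ℤ → A)) {c : ℝ} (hc : 0 < c)
    (hmaps : ∀ ρ, IsInvariantProbOn T X ρ → IsInvariantProbOn T' X' (Φ ρ))
    (hsurj : ∀ ν, IsInvariantProbOn T' X' ν → ∃ ρ, IsInvariantProbOn T X ρ ∧ Φ ρ = ν)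
    (hscale : ∀ ρ, IsInvariantProbOn T X ρ →
      ent' (Φ ρ) + ∫ x, f' x ∂(Φ ρ) = c * (ent ρ + ∫ x, f x ∂ρ))
    (hμ : IsInvariantProbOn T X μ) :
    IsEquilibriumFor ent T X f μ ↔ IsEquilibriumFor ent' T' X' f' (Φ μ) := by
  simp only [isEquilibriumFor_iff, hμ, hmaps μ hμ, true_and, hscale μ hμ]
  constructor
  · intro hmax ν hν
    obtain ⟨ρ, hρ, rfl⟩ := hsurj ν hν
    rw [hscale ρ hρ]
    exact mul_le_mul_of_nonneg_left (hmax ρ hρ) hc.le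
  · intro hmax ρ hρ
    have hle := hmax (Φ ρ) (hmaps ρ hρ)
    rw [hscale ρ hρ] at hle
    exact le_of_mul_le_mul_left hle hc

end Equilibrium

lemma pairwiseDisjoint_range_of_disjoint {A : Type*} {C : ℤ → Set (ℤ → A)} {p : ℕ}
    (hdisj : ∀ i j : ℤ, 0 ≤ i → i < j → j < p → Disjoint (C i) (C j)) :
    (range p : Set ℕ).PairwiseDisjoint fun i : ℕ => C i := by
  intro i hi j hj hij
  simp only [coe_range, Set.mem_Iio] at hi hj
  rcases hij.lt_or_gt with h | h
  · exact hdisj i j (by positivity) (by exact_mod_cast h) (by exact_mod_cast hj)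
  · exact (hdisj j i (by positivity) (by exact_mod_cast h) (by exact_mod_cast hi)).symm

theorem stmt14_general {A : Type*} [Fintype A] [TopologicalSpace A] [DiscreteTopology A]
    [MeasurableSpace A] [BorelSpace A]
    (X : Set (ℤ → A))
    (p : ℕ) (hp : 0 < p) (C : ℤ → Set (ℤ → A))
    (hper : ∀ i : ℤ, C (i + p) = C i)
    (hclosed : ∀ i : ℤ, IsClosed (C i))
    (hdisj : ∀ i j : ℤ, 0 ≤ i → i < j → j < p → Disjoint (C i) (C j))
    (hcover : X = ⋃ i ∈ Finset.range p, C (i : ℤ))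
    (hcycle : ∀ i : ℤ, shiftZ 1 '' C i = C (i + 1))
    (f : (ℤ → A) → ℝ) (hf : Continuous f)
    (entS entP : Measure (ℤ → A) → ℝ)
    (hAbramov : ∀ lam : Measure (ℤ → A), IsProbabilityMeasure lam → lam X = 1 →
      lam.map (shiftZ 1) = lam → entP ((p : ℝ≥0∞) • lam.restrict (C 0)) = p * entS lam)
    (μ : Measure (ℤ → A)) (hμprob : IsProbabilityMeasure μ) (hμconc : μ X = 1)
    (hμinv : μ.map (shiftZ 1) = μ) :
    entS μ + ∫ x, f x ∂μ =
      (1 / p) * (entP ((p : ℝ≥0∞) • μ.restrict (C 0)) +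
        ∫ x, Rp p f x ∂((p : ℝ≥0∞) • μ.restrict (C 0))) ∧
    (IsEquilibriumFor entS (shiftZ 1) X f μ ↔
      IsEquilibriumFor entP (shiftZ (p : ℤ)) (C 0) (Rp p f)
        ((p : ℝ≥0∞) • μ.restrict (C 0))) := by
  have hC : IsCyclicPartition X p C := ⟨fun i => (hclosed i).measurableSet, hper,
    pairwiseDisjoint_range_of_disjoint hdisj, hcover, hcycle⟩
  have hscale : ∀ ρ, IsInvariantProbOn (shiftZ 1) X ρ →
      entP ((p : ℝ≥0∞) • ρ.restrict (C 0)) + ∫ x, Rp p f x ∂((p : ℝ≥0∞) • ρ.restrict (C 0)) =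
        p * (entS ρ + ∫ x, f x ∂ρ) := by
    intro ρ hρ
    have := hρ.1
    rw [hAbramov ρ hρ.1 hρ.2.1 hρ.2.2, hC.integral_Rp (hf.integrable_of_hasCompactSupport
      (HasCompactSupport.of_compactSpace f)) (hρ.ae_mem hC.measurableSet_space) hρ.2.2, mul_add]
  have hμ : IsInvariantProbOn (shiftZ 1) X μ := ⟨hμprob, hμconc, hμinv⟩
  have hpR : (0 : ℝ) < p := by exact_mod_cast hp
  refine ⟨by rw [hscale μ hμ, one_div, inv_mul_cancel_left₀ hpR.ne'], ?_⟩
  exact isEquilibriumFor_iff_of_surjOn (fun ρ => (p : ℝ≥0∞) • ρ.restrict (C 0)) hpR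
    (fun ρ hρ => hC.isInvariantProbOn_smul_restrict hρ)
    (fun ν hν => hC.exists_isInvariantProbOn_smul_restrict_eq hp hν) hscale hμ

/-- for an irreducible SFT `X` of period `p` with cyclically moving classes
`C i`, writing `μ' = p·μ|_{C 0}`, and given Abramov's formula relating the entropy `entS`
of `(X, σ)` and the entropy `entP` of `(C 0, σᵖ)`, one has
`entS μ + ∫ f dμ = (1/p)(entP μ' + ∫ R_p f dμ')`, and `μ` is an equilibrium measure for `f`
on `(X, σ)` iff `μ'` is an equilibrium measure for `R_p f` on `(C 0, σᵖ)`. -/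
theorem stmt14 {A : Type*} [Fintype A] [TopologicalSpace A] [DiscreteTopology A]
    [MeasurableSpace A] [BorelSpace A]
    (X : Set (ℤ → A)) (hX : IsShiftSpace X) (hSFT : IsSFT X) (hirr : IrreducibleShift X)
    (p : ℕ) (hp : 0 < p) (C : ℤ → Set (ℤ → A))
    (hper : ∀ i : ℤ, C (i + p) = C i)
    (hclosed : ∀ i : ℤ, IsClosed (C i))
    (hdisj : ∀ i j : ℤ, 0 ≤ i → i < j → j < p → Disjoint (C i) (C j))
    (hcover : X = ⋃ i ∈ Finset.range p, C (i : ℤ))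
    (hcycle : ∀ i : ℤ, shiftZ 1 '' C i = C (i + 1))
    (f : (ℤ → A) → ℝ) (hf : Continuous f)
    (entS entP : Measure (ℤ → A) → ℝ)
    (hAbramov : ∀ lam : Measure (ℤ → A), IsProbabilityMeasure lam → lam X = 1 →
      lam.map (shiftZ 1) = lam → entP ((p : ℝ≥0∞) • lam.restrict (C 0)) = p * entS lam)
    (μ : Measure (ℤ → A)) (hμprob : IsProbabilityMeasure μ) (hμconc : μ X = 1)
    (hμinv : μ.map (shiftZ 1) = μ) :
    entS μ + ∫ x, f x ∂μ =
      (1 / p) * (entP ((p : ℝ≥0∞) • μ.restrict (C 0)) +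
        ∫ x, Rp p f x ∂((p : ℝ≥0∞) • μ.restrict (C 0))) ∧
    (IsEquilibriumFor entS (shiftZ 1) X f μ ↔
      IsEquilibriumFor entP (shiftZ (p : ℤ)) (C 0) (Rp p f)
        ((p : ℝ≥0∞) • μ.restrict (C 0))) :=
  stmt14_general X p hp C hper hclosed hdisj hcover hcycle f hf entS entP hAbramov μ hμprob hμconc
    hμinv
end

section
/- Let X be an irreducible shift of finite type, Y a sofic shift, pi: X -> Y a finite-to-one factor code, and f: Y -> R continuous. Then the topological pressures agree: P_X(sigma, f o pi) = P_Y(sigma, f). Moreover, if nu is an equilibrium measure for f on Y, then any shift-invariant lift mu of nu (pi_* mu = nu) is an equilibrium measure for f o pi on X. -/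
/-!
Pushing forward along `π` sends shift-invariant probability measures on `X` to shift-invariant
probability measures on `Y`, preserving the entropy and the integral of `f`. Conversely every
invariant `ν` on `Y` has an invariant lift: spread the mass `ν(dy)` uniformly over the finite
fibre `X ∩ π⁻¹{y}`. The shift permutes the fibres, so this lift is again shift-invariant; it is a
genuine measure because `y ↦ #(F ∩ π⁻¹{y})` is Borel for closed `F`. Hence both pressures are
suprema of the same set of values, and an invariant lift of an equilibrium measure attains the
value of `ν`, which dominates the value of every invariant measure on `X` through its
push-forward.
-/

open MeasureTheory

/-- The topological pressure of `f` on `(X, σ)`, defined variationally with respect to an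
entropy functional `ent`: the sup of `ent μ + ∫ f dμ` over shift-invariant probability
measures concentrated on `X`. -/
noncomputable def pressureOf {A : Type*} [MeasurableSpace A]
    (ent : Measure (ℤ → A) → ℝ) (X : Set (ℤ → A)) (f : (ℤ → A) → ℝ) : ℝ :=
  sSup {r : ℝ | ∃ μ : Measure (ℤ → A), IsProbabilityMeasure μ ∧ μ X = 1 ∧
    μ.map (shiftZ 1) = μ ∧ r = ent μ + ∫ x, f x ∂μ}

open ProbabilityTheory Set Function

theorem Set.natCast_le_encard_iff_exists_injective {α : Type*} {s : Set α} {k : ℕ} :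
    (k : ℕ∞) ≤ s.encard ↔ ∃ v : Fin k → α, Injective v ∧ ∀ i, v i ∈ s := by
  constructor
  · intro h
    obtain ⟨t, hts, htk⟩ := exists_subset_encard_eq h
    have : Finite t := finite_of_encard_eq_coe htk
    have hcard : Nat.card t = k := by
      rw [Nat.card_coe_set_eq, ncard_def, htk, ENat.toNat_natCast]
    let e : Fin k ≃ t := (finCongr hcard.symm).trans (Finite.equivFin t).symm
    exact ⟨fun i => e i, Subtype.val_injective.comp e.injective, fun i => hts (e i).2⟩
  · rintro ⟨v, hv, hvs⟩
    calc (k : ℕ∞) = ENat.card (Fin k) := by simp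
      _ ≤ (range v).encard := hv.encard_range
      _ ≤ s.encard := encard_le_encard (range_subset_iff.2 hvs)

theorem isOpen_setOf_injective {ι α : Type*} [Finite ι] [TopologicalSpace α] [T2Space α] :
    IsOpen {v : ι → α | Injective v} := by
  have : {v : ι → α | Injective v} = ⋂ i, ⋂ j, ⋂ (_ : i ≠ j), {v | v i ≠ v j} := by
    ext v
    simp only [mem_ofPred_eq, mem_iInter]
    exact ⟨fun hv i j hij h => hij (hv h), fun h i j hv => by_contra fun hij => h i j hij hv⟩
  rw [this]
  exact isOpen_iInter_of_finite fun i => isOpen_iInter_of_finite fun j =>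
    isOpen_iInter_of_finite fun _ => isOpen_ne_fun (continuous_apply i) (continuous_apply j)

theorem IsLocallyClosed.isSigmaCompact {α : Type*} [TopologicalSpace α] [LocallyCompactSpace α]
    [SecondCountableTopology α] {s : Set α} (hs : IsLocallyClosed s) : IsSigmaCompact s := by
  have := hs.locallyCompactSpace
  exact isSigmaCompact_iff_sigmaCompactSpace.2 inferInstance

theorem IsSigmaCompact.measurableSet {β : Type*} [TopologicalSpace β] [T2Space β]
    [MeasurableSpace β] [OpensMeasurableSpace β] {s : Set β} (hs : IsSigmaCompact s) :
    MeasurableSet s := by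
  obtain ⟨K, hK, rfl⟩ := hs
  exact .iUnion fun n => (hK n).measurableSet

section FiberCount

variable {α β : Type*} [TopologicalSpace α] [LocallyCompactSpace α] [T2Space α]
  [SecondCountableTopology α] [TopologicalSpace β] [T2Space β] [MeasurableSpace β]
  [OpensMeasurableSpace β] {π : α → β}

/- The `y` whose fibre in `F` has at least `k + 1` points form the continuous image of the
`σ`-compact set of injective `(k + 1)`-tuples in `F` lying in a single fibre. -/
theorem measurableSet_setOf_natCast_le_encard_inter_preimage {F : Set α} (hF : IsClosed F)
    (hπ : Continuous π) (k : ℕ) :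
    MeasurableSet {y | (k : ℕ∞) ≤ (F ∩ π ⁻¹' {y}).encard} := by
  rcases k with _ | k
  · simp
  set S : Set (Fin (k + 1) → α) :=
    {v | Injective v} ∩ {v | ∀ i, v i ∈ F ∧ π (v i) = π (v 0)}
  have hC : IsClosed {v : Fin (k + 1) → α | ∀ i, v i ∈ F ∧ π (v i) = π (v 0)} := by
    simp only [ofPred_forall]
    exact isClosed_iInter fun i => (hF.preimage (continuous_apply i)).inter
      (isClosed_eq (hπ.comp (continuous_apply i)) (hπ.comp (continuous_apply 0)))
  have hS : IsLocallyClosed S := ⟨_, _, isOpen_setOf_injective, hC, rfl⟩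
  have hS_image : {y | ((k + 1 : ℕ) : ℕ∞) ≤ (F ∩ π ⁻¹' {y}).encard} =
      (fun v => π (v 0)) '' S := by
    ext y
    simp only [mem_ofPred_eq, natCast_le_encard_iff_exists_injective, mem_image, S]
    constructor
    · rintro ⟨v, hv, hvy⟩
      exact ⟨v, ⟨hv, fun i => ⟨(hvy i).1, (hvy i).2.trans (hvy 0).2.symm⟩⟩, (hvy 0).2⟩
    · rintro ⟨v, ⟨hv, hvF⟩, rfl⟩
      exact ⟨v, hv, hvF⟩
  rw [hS_image]
  exact (hS.isSigmaCompact.image (hπ.comp (continuous_apply 0))).measurableSet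

theorem measurable_encard_inter_preimage {F : Set α} (hF : IsClosed F) (hπ : Continuous π) :
    Measurable fun y => (F ∩ π ⁻¹' {y}).encard := by
  refine ENat.measurable_iff.2 fun n => ?_
  have : (fun y => (F ∩ π ⁻¹' {y}).encard) ⁻¹' {(n : ℕ∞)} =
      {y | (n : ℕ∞) ≤ (F ∩ π ⁻¹' {y}).encard} \
        {y | ((n + 1 : ℕ) : ℕ∞) ≤ (F ∩ π ⁻¹' {y}).encard} := by
    ext y
    simp only [mem_preimage, mem_singleton_iff, mem_sdiff, mem_ofPred_eq, not_le]
    constructor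
    · rintro h
      rw [h]
      exact ⟨le_rfl, by exact_mod_cast n.lt_succ_self⟩
    · rintro ⟨h1, h2⟩
      exact le_antisymm (Order.le_of_lt_add_one (by simpa using h2)) h1
  rw [this]
  exact (measurableSet_setOf_natCast_le_encard_inter_preimage hF hπ n).diff
    (measurableSet_setOf_natCast_le_encard_inter_preimage hF hπ (n + 1))

variable [MeasurableSpace α] [BorelSpace α]

theorem measurable_count_inter_preimage {F : Set α} (hF : IsClosed F) (hπ : Continuous π) :
    Measurable fun y => Measure.count (F ∩ π ⁻¹' {y}) := by
  have hcount : ∀ y, Measure.count (F ∩ π ⁻¹' {y}) = (F ∩ π ⁻¹' {y}).encard := fun y =>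
    Measure.count_apply (hF.inter (isClosed_singleton.preimage hπ)).measurableSet
  simp_rw [hcount]
  exact Measurable.of_discrete.comp (measurable_encard_inter_preimage hF hπ)

theorem measurable_uniformOn_inter_preimage {X : Set α} (hX : IsClosed X) (hπ : Continuous π) :
    Measurable fun y => uniformOn (X ∩ π ⁻¹' {y}) := by
  have hclosed : ∀ F, IsClosed F → Measurable fun y => uniformOn (X ∩ π ⁻¹' {y}) F := by
    intro F hF
    have h : ∀ y, uniformOn (X ∩ π ⁻¹' {y}) F =
        (Measure.count (X ∩ π ⁻¹' {y}))⁻¹ * Measure.count (X ∩ F ∩ π ⁻¹' {y}) := fun y => by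
      rw [uniformOn, cond_apply (hX.inter (isClosed_singleton.preimage hπ)).measurableSet,
        inter_right_comm, inter_assoc X F]
    simp_rw [h]
    exact (measurable_count_inter_preimage hX hπ).inv.mul
      (measurable_count_inter_preimage (hX.inter hF) hπ)
  exact .measure_of_isPiSystem (by rw [BorelSpace.measurable_eq (α := α),
    borel_eq_generateFrom_isClosed]) isPiSystem_isClosed hclosed (hclosed _ isClosed_univ)

end FiberCount

namespace MeasureTheory.Measure

variable {α β γ : Type*} [MeasurableSpace α] [MeasurableSpace β] [MeasurableSpace γ]

theorem map_bind {m : Measure α} {κ : α → Measure β} (hκ : Measurable κ) {f : β → γ}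
    (hf : Measurable f) : (m.bind κ).map f = m.bind fun a => (κ a).map f := by
  rw [bind, bind, ← join_map_map hf, map_map (measurable_map f hf) hκ]
  rfl

theorem bind_map {m : Measure α} {g : α → β} (hg : Measurable g) {κ : β → Measure γ}
    (hκ : Measurable κ) : (m.map g).bind κ = m.bind (κ ∘ g) := by
  rw [bind, bind, map_map hκ hg]

theorem map_map_eq_of_ae_semiconj {μ : Measure α} {T : α → α} {S : β → β} {π : α → β}
    (hT : Measurable T) (hS : Measurable S) (hπ : Measurable π) (hμT : μ.map T = μ)
    (h : ∀ᵐ x ∂μ, π (T x) = S (π x)) : (μ.map π).map S = μ.map π := by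
  calc (μ.map π).map S = μ.map (S ∘ π) := map_map hS hπ
    _ = μ.map (π ∘ T) := map_congr (h.mono fun x hx => hx.symm)
    _ = μ.map π := by rw [← map_map hπ hT, hμT]

end MeasureTheory.Measure

namespace ProbabilityTheory

variable {Ω Ω' : Type*} [MeasurableSpace Ω] [MeasurableSingletonClass Ω] [MeasurableSpace Ω']
  {s : Set Ω}

theorem map_uniformOn_of_injective [MeasurableSingletonClass Ω'] (hs : s.Finite) {T : Ω → Ω'}
    (hT : Injective T) (hTm : Measurable T) : (uniformOn s).map T = uniformOn (T '' s) := by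
  ext t ht
  rw [Measure.map_apply hTm ht, uniformOn, uniformOn, cond_apply hs.measurableSet,
    cond_apply (hs.image T).measurableSet, ← image_inter_preimage,
    Measure.count_apply hs.measurableSet, Measure.count_apply (hs.image T).measurableSet,
    Measure.count_apply (hs.inter_of_left _).measurableSet,
    Measure.count_apply ((hs.inter_of_left _).image T).measurableSet,
    hT.encard_image, hT.encard_image]

theorem map_uniformOn_eq_dirac (hs : s.Finite) (hs' : s.Nonempty) {f : Ω → Ω'} {c : Ω'}
    (hfs : ∀ x ∈ s, f x = c) : (uniformOn s).map f = .dirac c := by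
  have := isProbabilityMeasure_uniformOn hs hs'
  have hf : f =ᵐ[uniformOn s] fun _ => c := ae_cond_of_forall_mem hs.measurableSet hfs
  rw [Measure.map_congr hf, Measure.map_const, measure_univ, one_smul]

end ProbabilityTheory

section UniformLift

variable {α β : Type*} [TopologicalSpace α] [LocallyCompactSpace α] [T2Space α]
  [SecondCountableTopology α] [MeasurableSpace α] [BorelSpace α] [TopologicalSpace β]
  [T2Space β] [MeasurableSpace β] [BorelSpace β]
  {X : Set α} {π : α → β} {ν : Measure β}

noncomputable def uniformLift (X : Set α) (π : α → β) (ν : Measure β) : Measure α :=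
  ν.bind fun y => uniformOn (X ∩ π ⁻¹' {y})

theorem map_uniformLift (hX : IsClosed X) (hπ : Continuous π)
    (hfin : ∀ y, (X ∩ π ⁻¹' {y}).Finite) (hne : ∀ᵐ y ∂ν, (X ∩ π ⁻¹' {y}).Nonempty) :
    (uniformLift X π ν).map π = ν := by
  rw [uniformLift, Measure.map_bind (measurable_uniformOn_inter_preimage hX hπ) hπ.measurable]
  conv_rhs => rw [← Measure.bind_dirac (m := ν)]
  exact Measure.bind_congr_right <| hne.mono fun y hy =>
    map_uniformOn_eq_dirac (hfin y) hy fun x hx => hx.2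

theorem uniformLift_self (hX : IsClosed X) (hπ : Continuous π)
    (hfin : ∀ y, (X ∩ π ⁻¹' {y}).Finite) (hne : ∀ᵐ y ∂ν, (X ∩ π ⁻¹' {y}).Nonempty) :
    uniformLift X π ν X = ν univ := by
  rw [uniformLift, Measure.bind_apply hX.measurableSet
    (measurable_uniformOn_inter_preimage hX hπ).aemeasurable, ← lintegral_one]
  exact lintegral_congr_ae <| hne.mono fun y hy =>
    uniformOn_eq_one_of (hfin y) hy inter_subset_left

theorem map_uniformLift_of_image_eq (hX : IsClosed X) (hπ : Continuous π)
    (hfin : ∀ y, (X ∩ π ⁻¹' {y}).Finite) {T : α → α} {S : β → β} (hT : Measurable T)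
    (hT_inj : Injective T) (hS : Measurable S)
    (himage : ∀ y, T '' (X ∩ π ⁻¹' {y}) = X ∩ π ⁻¹' {S y}) :
    (uniformLift X π ν).map T = uniformLift X π (ν.map S) := by
  rw [uniformLift, uniformLift, Measure.map_bind (measurable_uniformOn_inter_preimage hX hπ) hT,
    Measure.bind_map hS (measurable_uniformOn_inter_preimage hX hπ)]
  congr 1
  funext y
  rw [comp_apply, map_uniformOn_of_injective (hfin y) hT_inj hT, himage]

theorem exists_invariant_lift (hX : IsClosed X) (hπ : Continuous π)
    (hfin : ∀ y, (X ∩ π ⁻¹' {y}).Finite) {T : α → α} {S : β → β} (hT : Measurable T)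
    (hT_inj : Injective T) (hS : Measurable S)
    (himage : ∀ y, T '' (X ∩ π ⁻¹' {y}) = X ∩ π ⁻¹' {S y}) [IsProbabilityMeasure ν]
    (hνS : ν.map S = ν) (hne : ∀ᵐ y ∂ν, (X ∩ π ⁻¹' {y}).Nonempty) :
    ∃ μ : Measure α, IsProbabilityMeasure μ ∧ μ X = 1 ∧ μ.map T = μ ∧ μ.map π = ν := by
  have hmap := map_uniformLift hX hπ hfin hne
  refine ⟨uniformLift X π ν, ⟨?_⟩, ?_, ?_, hmap⟩
  · rw [← preimage_univ (f := π), ← Measure.map_apply hπ.measurable .univ, hmap, measure_univ]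
  · rw [uniformLift_self hX hπ hfin hne, measure_univ]
  · rw [map_uniformLift_of_image_eq hX hπ hfin hT hT_inj hS himage, hνS]

end UniformLift

theorem image_inter_preimage_singleton_of_semiconj {α β : Type*} {X : Set α} {π : α → β}
    {T : α → α} {S : β → β} (hTX : T '' X = X) (hS : Injective S)
    (hπ : ∀ x ∈ X, π (T x) = S (π x)) (y : β) :
    T '' (X ∩ π ⁻¹' {y}) = X ∩ π ⁻¹' {S y} := by
  ext x
  constructor
  · rintro ⟨x, ⟨hxX, hxy⟩, rfl⟩
    exact ⟨hTX ▸ mem_image_of_mem T hxX, by simp_all⟩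
  · rintro ⟨hxX, hxy⟩
    obtain ⟨x', hx'X, rfl⟩ := hTX.symm ▸ hxX
    exact ⟨x', ⟨hx'X, hS (by simpa [hπ x' hx'X] using hxy)⟩, rfl⟩

theorem finite_inter_preimage_singleton {α β : Type*} {X : Set α} {π : α → β}
    (hfin : ∀ y ∈ π '' X, {x | x ∈ X ∧ π x = y}.Finite) (y : β) :
    (X ∩ π ⁻¹' {y}).Finite := by
  by_cases hy : y ∈ π '' X
  · exact hfin y hy
  · exact finite_empty.subset fun x hx => hy ⟨x, hx⟩

section Shift

variable {A B : Type*}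

theorem shiftZ_neg_shiftZ (k : ℤ) (x : ℤ → A) : shiftZ (-k) (shiftZ k x) = x := by
  funext n
  simp [shiftZ]

theorem shiftZ_shiftZ_neg (k : ℤ) (x : ℤ → A) : shiftZ k (shiftZ (-k) x) = x := by
  funext n
  simp [shiftZ]

theorem shiftZ_injective (k : ℤ) : Injective (shiftZ k : (ℤ → A) → ℤ → A) :=
  LeftInverse.injective (shiftZ_neg_shiftZ k)

theorem continuous_shiftZ [TopologicalSpace A] (k : ℤ) :
    Continuous (shiftZ k : (ℤ → A) → ℤ → A) :=
  continuous_pi fun n => continuous_apply (n + k)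

theorem IsShiftSpace.image_shiftZ [TopologicalSpace A] {X : Set (ℤ → A)} (hX : IsShiftSpace X)
    (k : ℤ) : shiftZ k '' X = X :=
  (image_subset_iff.2 fun x hx => hX.2 k x hx).antisymm fun x hx =>
    ⟨shiftZ (-k) x, hX.2 (-k) x hx, shiftZ_shiftZ_neg k x⟩

variable [TopologicalSpace A] [CompactSpace A] [SecondCountableTopology A]
  [MeasurableSpace A] [BorelSpace A] [TopologicalSpace B] [T2Space B] [SecondCountableTopology B]
  [MeasurableSpace B] [BorelSpace B] {X : Set (ℤ → A)} {π : (ℤ → A) → ℤ → B}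

theorem shift_invariant_map_of_factor {μ : Measure (ℤ → A)} [IsProbabilityMeasure μ]
    (hX : IsClosed X) (hπ : Continuous π) (hequiv : ∀ x ∈ X, π (shiftZ 1 x) = shiftZ 1 (π x))
    (hμX : μ X = 1) (hμσ : μ.map (shiftZ 1) = μ) :
    IsProbabilityMeasure (μ.map π) ∧ μ.map π (π '' X) = 1 ∧
      (μ.map π).map (shiftZ 1) = μ.map π := by
  have hae : ∀ᵐ x ∂μ, x ∈ X :=
    (ae_mem_iff_measure_eq hX.measurableSet.nullMeasurableSet).2 (by rw [hμX, measure_univ])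
  refine ⟨Measure.isProbabilityMeasure_map hπ.aemeasurable, ?_, Measure.map_map_eq_of_ae_semiconj
    (continuous_shiftZ 1).measurable (continuous_shiftZ 1).measurable hπ.measurable hμσ
    (hae.mono hequiv)⟩
  rw [Measure.map_apply hπ.measurable (hX.isCompact.image hπ).measurableSet]
  exact le_antisymm prob_le_one (hμX ▸ measure_mono (subset_preimage_image π X))

theorem exists_shift_invariant_lift [T2Space A] (hX : IsShiftSpace X) (hπ : Continuous π)
    (hequiv : ∀ x ∈ X, π (shiftZ 1 x) = shiftZ 1 (π x))
    (hfin : ∀ y ∈ π '' X, {x | x ∈ X ∧ π x = y}.Finite) {ν : Measure (ℤ → B)}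
    [IsProbabilityMeasure ν] (hνX : ν (π '' X) = 1) (hνσ : ν.map (shiftZ 1) = ν) :
    ∃ μ : Measure (ℤ → A), IsProbabilityMeasure μ ∧ μ X = 1 ∧ μ.map (shiftZ 1) = μ ∧
      μ.map π = ν := by
  have hne : ∀ᵐ y ∂ν, (X ∩ π ⁻¹' {y}).Nonempty :=
    ((ae_mem_iff_measure_eq (hX.1.isCompact.image hπ).measurableSet.nullMeasurableSet).2
      (by rw [hνX, measure_univ])).mono fun y ⟨x, hxX, hxy⟩ => ⟨x, hxX, hxy⟩
  exact exists_invariant_lift hX.1 hπ (finite_inter_preimage_singleton hfin)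
    (continuous_shiftZ 1).measurable (shiftZ_injective 1) (continuous_shiftZ 1).measurable
    (image_inter_preimage_singleton_of_semiconj (hX.image_shiftZ 1) (shiftZ_injective 1) hequiv)
    hνσ hne

end Shift

theorem stmt15_general {A B : Type*} [Fintype A] [TopologicalSpace A] [DiscreteTopology A]
    [MeasurableSpace A] [BorelSpace A]
    [Fintype B] [TopologicalSpace B] [DiscreteTopology B]
    [MeasurableSpace B] [BorelSpace B]
    (X : Set (ℤ → A)) (hX : IsShiftSpace X)
    (Y : Set (ℤ → B))
    (π : (ℤ → A) → (ℤ → B)) (hcont : Continuous π)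
    (hequiv : ∀ x ∈ X, π (shiftZ 1 x) = shiftZ 1 (π x))
    (hsurj : π '' X = Y)
    (hfin : ∀ y ∈ Y, {x | x ∈ X ∧ π x = y}.Finite)
    (f : (ℤ → B) → ℝ) (hf : Continuous f)
    (entX : Measure (ℤ → A) → ℝ) (entY : Measure (ℤ → B) → ℝ)
    (hent : ∀ μ : Measure (ℤ → A), IsProbabilityMeasure μ → μ X = 1 →
      μ.map (shiftZ 1) = μ → entY (μ.map π) = entX μ) :
    pressureOf entX X (fun x => f (π x)) = pressureOf entY Y f ∧
    (∀ (ν : Measure (ℤ → B)) (μ : Measure (ℤ → A)),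
      IsEquilibriumFor entY (shiftZ 1) Y f ν →
      IsProbabilityMeasure μ → μ X = 1 → μ.map (shiftZ 1) = μ → μ.map π = ν →
      IsEquilibriumFor entX (shiftZ 1) X (fun x => f (π x)) μ) := by
  subst hsurj
  have hint (μ : Measure (ℤ → A)) : ∫ y, f y ∂μ.map π = ∫ x, f (π x) ∂μ :=
    integral_map hcont.aemeasurable hf.aestronglyMeasurable
  refine ⟨congrArg sSup (ext fun r => ⟨?_, ?_⟩), ?_⟩
  · rintro ⟨μ, hμ, hμX, hμσ, rfl⟩
    obtain ⟨hν, hνX, hνσ⟩ := shift_invariant_map_of_factor hX.1 hcont hequiv hμX hμσ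
    exact ⟨μ.map π, hν, hνX, hνσ, by rw [hent μ hμ hμX hμσ, hint]⟩
  · rintro ⟨ν, hν, hνX, hνσ, rfl⟩
    obtain ⟨μ, hμ, hμX, hμσ, rfl⟩ := exists_shift_invariant_lift hX hcont hequiv hfin hνX hνσ
    exact ⟨μ, hμ, hμX, hμσ, by rw [hent μ hμ hμX hμσ, hint]⟩
  · rintro _ μ ⟨-, -, -, hmax⟩ hμ hμX hμσ rfl
    refine ⟨hμ, hμX, hμσ, fun lam hlam hlamX hlamσ => ?_⟩
    obtain ⟨hν, hνX, hνσ⟩ := shift_invariant_map_of_factor hX.1 hcont hequiv hlamX hlamσ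
    have := hmax _ hν hνX hνσ
    rwa [hent lam hlam hlamX hlamσ, hent μ hμ hμX hμσ, hint, hint] at this

/-- for a finite-to-one factor code `π` from an irreducible SFT `X` onto a
sofic shift `Y` (entropy being preserved along `π`), the pressures of `f ∘ π` and `f`
coincide, and every shift-invariant lift of an equilibrium measure for `f` on `Y` is an
equilibrium measure for `f ∘ π` on `X`. -/
theorem stmt15 {A B : Type*} [Fintype A] [TopologicalSpace A] [DiscreteTopology A]
    [MeasurableSpace A] [BorelSpace A]
    [Fintype B] [TopologicalSpace B] [DiscreteTopology B]
    [MeasurableSpace B] [BorelSpace B]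
    (X : Set (ℤ → A)) (hX : IsShiftSpace X) (hSFT : IsSFT X) (hirr : IrreducibleShift X)
    (Y : Set (ℤ → B)) (hY : IsShiftSpace Y)
    (π : (ℤ → A) → (ℤ → B)) (hcont : Continuous π)
    (hequiv : ∀ x ∈ X, π (shiftZ 1 x) = shiftZ 1 (π x))
    (hsurj : π '' X = Y)
    (hfin : ∀ y ∈ Y, {x | x ∈ X ∧ π x = y}.Finite)
    (f : (ℤ → B) → ℝ) (hf : Continuous f)
    (entX : Measure (ℤ → A) → ℝ) (entY : Measure (ℤ → B) → ℝ)
    (hent : ∀ μ : Measure (ℤ → A), IsProbabilityMeasure μ → μ X = 1 →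
      μ.map (shiftZ 1) = μ → entY (μ.map π) = entX μ) :
    pressureOf entX X (fun x => f (π x)) = pressureOf entY Y f ∧
    (∀ (ν : Measure (ℤ → B)) (μ : Measure (ℤ → A)),
      IsEquilibriumFor entY (shiftZ 1) Y f ν →
      IsProbabilityMeasure μ → μ X = 1 → μ.map (shiftZ 1) = μ → μ.map π = ν →
      IsEquilibriumFor entX (shiftZ 1) X (fun x => f (π x)) μ) :=
  stmt15_general X hX Y π hcont hequiv hsurj hfin f hf entX entY hent
end

section
/- Let X be an irreducible shift of finite type, Y an irreducible sofic shift, and pi: X -> Y an almost invertible one-block factor code with a magic symbol b (b has a unique preimage symbol a, and any preimage point of a point whose 0-coordinate is b has 0-coordinate a). If y and y' are doubly transitive points of Y with (y, y') in the Gibbs relation T_Y, then their unique preimages x = pi^{-1}(y) and x' = pi^{-1}(y') satisfy (x, x') in T_X. -/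
open Filter Set

section Words

variable {A : Type*}

theorem occursAt_ofFn_iff {n : ℕ} (x : ℤ → A) (f : Fin n → A) (i : ℤ) :
    occursAt x (List.ofFn f) i ↔ ∀ j : Fin n, x (i + j) = f j := by
  refine ⟨fun h j => ?_, fun h j => ?_⟩
  · simpa using h (Fin.cast List.length_ofFn.symm j)
  · rw [List.get_ofFn]
    exact h (Fin.cast List.length_ofFn j)

theorem DoublyTransitive.exists_shiftZ_eqOn {Y : Set (ℤ → A)} {y : ℤ → A}
    (hdt : DoublyTransitive Y y) (hy : y ∈ Y) (k : ℕ) (M : ℤ) :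
    (∃ t, M ≤ t ∧ EqOn (shiftZ t y) y (Icc (-k) k)) ∧
      (∃ t, t ≤ M ∧ EqOn (shiftZ t y) y (Icc (-k) k)) := by
  set w := List.ofFn fun j : Fin (2 * k + 1) => y (-k + j)
  have hw : InLanguage Y w := ⟨y, hy, -k, (occursAt_ofFn_iff _ _ _).2 fun _ => rfl⟩
  have hrec : ∀ i, occursAt y w i → EqOn (shiftZ (i + k) y) y (Icc (-k) k) := by
    intro i hi m hm
    rw [mem_Icc] at hm
    have := (occursAt_ofFn_iff _ _ _).1 hi ⟨(m + k).toNat, by omega⟩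
    simp only [Int.toNat_of_nonneg (show 0 ≤ m + k by omega)] at this
    simpa [shiftZ, show m + (i + k) = i + (m + k) by ring] using this
  obtain ⟨i, hi, hocc⟩ := (hdt w hw).1 (M - k)
  obtain ⟨i', hi', hocc'⟩ := (hdt w hw).2 (M - k)
  exact ⟨⟨i + k, by omega, hrec i hocc⟩, ⟨i' + k, by omega, hrec i' hocc'⟩⟩

end Words

theorem Ultrafilter.exists_eventually_eq {ι A : Type*} [Finite A] (U : Ultrafilter ι)
    (f : ι → A) : ∃ a, ∀ᶠ k in (U : Filter ι), f k = a := by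
  obtain ⟨a, ha⟩ := (U.map f).eq_pure_of_finite
  exact ⟨a, show f ⁻¹' {a} ∈ U by rw [← Ultrafilter.mem_map, ha]; rfl⟩

namespace IsSFT

variable {A : Type*} {X : Set (ℤ → A)}

theorem shiftZ_mem (hX : IsSFT X) {x : ℤ → A} (hx : x ∈ X) (k : ℤ) : shiftZ k x ∈ X := by
  obtain ⟨n, F, rfl⟩ := hX
  intro i
  simpa [shiftZ, add_right_comm] using hx (i + k)

theorem mem_of_eventually_eq (hX : IsSFT X) {ι : Type*} {l : Filter ι} [l.NeBot]
    {xs : ι → ℤ → A} (hxs : ∀ k, xs k ∈ X) {z : ℤ → A} (hz : ∀ j, ∀ᶠ k in l, xs k j = z j) :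
    z ∈ X := by
  obtain ⟨n, F, rfl⟩ := hX
  intro i
  obtain ⟨k, hk⟩ := (eventually_all.2 fun j : Fin n => hz (i + j)).exists
  simpa only [hk] using hxs k i

theorem exists_piecewise_Ico_mem (hX : IsSFT X) :
    ∃ n : ℕ, ∀ u ∈ X, ∀ v ∈ X, ∀ a b : ℤ, EqOn u v (Icc (a - n) (a + n)) →
      EqOn u v (Icc (b - n) (b + n)) → (Ico a b).piecewise v u ∈ X := by
  obtain ⟨n, F, rfl⟩ := hX
  refine ⟨n, fun u hu v hv a b ha hb i => ?_⟩
  by_cases hin : a ≤ i ∧ i + n ≤ b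
  · have hwin : ∀ j : Fin n, (Ico a b).piecewise v u (i + j) = v (i + j) := fun j =>
      piecewise_eq_of_mem _ _ _ (by rw [mem_Ico]; omega)
    simpa only [hwin] using hv i
  · have hwin : ∀ j : Fin n, (Ico a b).piecewise v u (i + j) = u (i + j) := by
      intro j
      by_cases hj : i + j ∈ Ico a b
      · rw [piecewise_eq_of_mem _ _ _ hj]
        rw [mem_Ico] at hj
        by_cases hja : i + j ≤ a + n
        · exact (ha ⟨by omega, hja⟩).symm
        · exact (hb ⟨by omega, by omega⟩).symm
      · exact piecewise_eq_of_notMem _ _ _ hj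
    simpa only [hwin] using hu i

variable {B : Type*} {Q : A → B}

theorem eventually_shiftZ_eq_of_unique_preimage [Finite A] (hX : IsSFT X) {y : ℤ → B}
    {x : ℤ → A} (hx : ∀ z ∈ X, Q ∘ z = y → z = x) {w : ℤ → A} (hw : w ∈ X)
    {ι : Type*} (U : Ultrafilter ι) (t : ι → ℤ)
    (hQ : ∀ j, ∀ᶠ k in (U : Filter ι), Q (shiftZ (t k) w j) = y j) :
    ∀ j, ∀ᶠ k in (U : Filter ι), shiftZ (t k) w j = x j := by
  choose z hz using fun j => U.exists_eventually_eq fun k => shiftZ (t k) w j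
  have hzX : z ∈ X := hX.mem_of_eventually_eq (fun k => hX.shiftZ_mem hw (t k)) hz
  have hQz : Q ∘ z = y := funext fun j => by
    obtain ⟨k, hkz, hkQ⟩ := ((hz j).and (hQ j)).exists
    rw [Function.comp_apply, ← hkz, hkQ]
  rwa [← hx z hzX hQz]

/-- Since `y'` agrees with `y` far out, the shifts of both `x` and `x'` by `t k` converge to
preimages of `y` in `X`, hence to `x`. -/
theorem exists_eqOn_Icc_shift [Finite A] (hX : IsSFT X) {y y' : ℤ → B} {x x' : ℤ → A}
    (hx_uniq : ∀ z ∈ X, Q ∘ z = y → z = x) (hx : x ∈ X) (hpx : Q ∘ x = y)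
    (hx' : x' ∈ X) (hpx' : Q ∘ x' = y') {N : ℤ} (hyy' : ∀ m, N < |m| → y m = y' m)
    (t : ℕ → ℤ) (ht : ∀ k : ℕ, (k : ℤ) ≤ |t k|)
    (hrec : ∀ k : ℕ, EqOn (shiftZ (t k) y) y (Icc (-k) k)) (R M : ℕ) :
    ∃ k, M ≤ k ∧ EqOn x x' (Icc (t k - R) (t k + R)) := by
  set U := Ultrafilter.of (atTop : Filter ℕ)
  have hlarge : ∀ K : ℕ, ∀ᶠ k in (U : Filter ℕ), K ≤ k := fun K =>
    Ultrafilter.of_le _ (eventually_ge_atTop K)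
  have hrec' : ∀ j, ∀ᶠ k in (U : Filter ℕ), y (j + t k) = y j := fun j =>
    (hlarge j.natAbs).mono fun k hk => hrec k (by rw [mem_Icc]; omega)
  have hlim : ∀ j, ∀ᶠ k in (U : Filter ℕ), shiftZ (t k) x j = x j :=
    hX.eventually_shiftZ_eq_of_unique_preimage hx_uniq hx U t fun j =>
      (hrec' j).mono fun k hk => by rw [← hk, ← hpx]; rfl
  have hlim' : ∀ j, ∀ᶠ k in (U : Filter ℕ), shiftZ (t k) x' j = x j := by
    refine hX.eventually_shiftZ_eq_of_unique_preimage hx_uniq hx' U t fun j => ?_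
    filter_upwards [hrec' j, hlarge (j.natAbs + N.natAbs + 1)] with k hk hkN
    have hfar : N < |j + t k| := by
      have := ht k
      rw [le_abs] at this
      rw [lt_abs]
      omega
    rw [← hk, hyy' _ hfar, ← hpx']
    rfl
  have hwin : ∀ᶠ k in (U : Filter ℕ),
      ∀ j ∈ Icc (-(R : ℤ)) R, shiftZ (t k) x j = shiftZ (t k) x' j :=
    (finite_Icc _ _).eventually_all.2 fun j _ => ((hlim j).and (hlim' j)).mono
      fun k ⟨h, h'⟩ => h.trans h'.symm
  obtain ⟨k, hk, hkM⟩ := (hwin.and (hlarge M)).exists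
  refine ⟨k, hkM, fun m hm => ?_⟩
  rw [mem_Icc] at hm
  simpa [shiftZ] using hk (m - t k) (by rw [mem_Icc]; omega)

theorem exists_eqOn_compl_Ico_of_unique_preimage (hX : IsSFT X) {y' : ℤ → B} {x x' : ℤ → A}
    (hx'_uniq : ∀ z ∈ X, Q ∘ z = y' → z = x') (hx : x ∈ X) (hx' : x' ∈ X)
    (hpx' : Q ∘ x' = y') :
    ∃ n : ℕ, ∀ a b : ℤ, EqOn x x' (Icc (a - n) (a + n)) → EqOn x x' (Icc (b - n) (b + n)) →
      EqOn (Q ∘ x) y' (Ico a b)ᶜ → EqOn x x' (Ico a b)ᶜ := by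
  obtain ⟨n, hglue⟩ := hX.exists_piecewise_Ico_mem
  refine ⟨n, fun a b ha hb hQ m hm => ?_⟩
  set z := (Ico a b).piecewise x' x
  have hQz : Q ∘ z = y' := funext fun j => by
    by_cases hj : j ∈ Ico a b
    · simp [z, hj, ← hpx']
    · simpa [z, hj] using hQ hj
  rw [← hx'_uniq z (hglue x hx x' hx' a b ha hb) hQz]
  exact (piecewise_eq_of_notMem _ _ _ hm).symm

end IsSFT

theorem stmt17_general {A B : Type*} [Fintype A]
    (X : Set (ℤ → A)) (hSFT : IsSFT X) (Y : Set (ℤ → B)) (Q : A → B)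
    (hai : ∀ y ∈ Y, DoublyTransitive Y y → ∃! x, x ∈ X ∧ Q ∘ x = y)
    (y y' : ℤ → B) (hy : y ∈ Y) (hy' : y' ∈ Y)
    (hdty : DoublyTransitive Y y) (hdty' : DoublyTransitive Y y')
    (hrel : GibbsRel Y y y')
    (x x' : ℤ → A) (hx : x ∈ X) (hx' : x' ∈ X)
    (hpx : Q ∘ x = y) (hpx' : Q ∘ x' = y') :
    GibbsRel X x x' := by
  have hx_uniq : ∀ z ∈ X, Q ∘ z = y → z = x := fun z hz hQz =>
    (hai y hy hdty).unique ⟨hz, hQz⟩ ⟨hx, hpx⟩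
  have hx'_uniq : ∀ z ∈ X, Q ∘ z = y' → z = x' := fun z hz hQz =>
    (hai y' hy' hdty').unique ⟨hz, hQz⟩ ⟨hx', hpx'⟩
  obtain ⟨-, -, N, hN⟩ := hrel
  obtain ⟨n, hglue⟩ := hSFT.exists_eqOn_compl_Ico_of_unique_preimage hx'_uniq hx hx' hpx'
  choose tR htR hrecR using fun k : ℕ => (hdty.exists_shiftZ_eqOn hy k k).1
  choose tL htL hrecL using fun k : ℕ => (hdty.exists_shiftZ_eqOn hy k (-k)).2
  obtain ⟨kR, hkR, hR⟩ := hSFT.exists_eqOn_Icc_shift hx_uniq hx hpx hx' hpx' hN tR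
    (fun k => (htR k).trans (le_abs_self _)) hrecR n (N.natAbs + 1)
  obtain ⟨kL, hkL, hL⟩ := hSFT.exists_eqOn_Icc_shift hx_uniq hx hpx hx' hpx' hN tL
    (fun k => le_abs.2 (Or.inr (by linarith [htL k]))) hrecL n (N.natAbs + 1)
  have hoff := hglue (tL kL) (tR kR) hL hR fun m hm => by
    have hfar : N < |m| := by
      rw [mem_compl_iff, mem_Ico] at hm
      rw [lt_abs]
      have := htR kR
      have := htL kL
      omega
    rw [Function.comp_apply, ← hN m hfar, ← hpx]
    rfl
  refine ⟨hx, hx', max (-tL kL) (tR kR), fun m hm => hoff ?_⟩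
  rw [lt_abs, max_lt_iff, max_lt_iff] at hm
  rw [mem_compl_iff, mem_Ico]
  omega

/-- let `π = Q ∘ ·` be an almost invertible one-block factor code from an
irreducible SFT `X` onto an irreducible sofic shift `Y`, with a magic symbol `b` whose
unique preimage symbol is `a`. If `y, y'` are doubly transitive points of `Y` that are
Gibbs-related, then their (unique) `π`-preimages are Gibbs-related in `X`. -/
theorem stmt17 {A B : Type*} [Fintype A] [TopologicalSpace A] [DiscreteTopology A]
    [Fintype B] [TopologicalSpace B] [DiscreteTopology B]
    (X : Set (ℤ → A)) (hX : IsShiftSpace X) (hSFT : IsSFT X) (hXirr : IrreducibleShift X)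
    (Y : Set (ℤ → B)) (hY : IsShiftSpace Y) (hYirr : IrreducibleShift Y)
    (Q : A → B) (hfactor : (fun x => Q ∘ x) '' X = Y)
    (hai : ∀ y ∈ Y, DoublyTransitive Y y → ∃! x, x ∈ X ∧ Q ∘ x = y)
    (b : B) (hb : InLanguage Y [b]) (a : A) (hab : Q a = b)
    (huniq : ∀ a' : A, Q a' = b → a' = a)
    (y y' : ℤ → B) (hy : y ∈ Y) (hy' : y' ∈ Y)
    (hdty : DoublyTransitive Y y) (hdty' : DoublyTransitive Y y')
    (hrel : GibbsRel Y y y')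
    (x x' : ℤ → A) (hx : x ∈ X) (hx' : x' ∈ X)
    (hpx : Q ∘ x = y) (hpx' : Q ∘ x' = y') :
    GibbsRel X x x' :=
  stmt17_general X hSFT Y Q hai y y' hy hy' hdty hdty' hrel x x' hx hx' hpx hpx'
end
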